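/- arXiv:1410.7564 — 2 statements merged into one kernel-verified Lean document; each statement's English description precedes it below -/
import Mathlib

section
/- If λ = β = 1/2, then the 2-dimensional ideals of B'(1/2,1/2) are exactly span{a, ab} and span{b, ab}. -/
/-- The multiplication of the generalized ABO-blood type algebra `B'(l, β)` on `ℝ⁴`,
with ordered basis `o = e₀`, `a = e₁`, `b = e₂`, `ab = e₃`, determined by bilinearity,
commutativity and: `o∘o = o`, `o∘a = l•a`, `o∘b = l•b`, `a∘a = a`, `b∘b = b`,
`a∘b = ((l-β)/l)•a + ((l+β-1)/l)•b + ab`, `o∘ab = a∘ab = b∘ab = ab∘ab = 0`. -/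
noncomputable def Bmul (l β : ℝ) (x y : Fin 4 → ℝ) : Fin 4 → ℝ :=
  ![x 0 * y 0,
    l * (x 0 * y 1 + x 1 * y 0) + x 1 * y 1 + (l - β) / l * (x 1 * y 2 + x 2 * y 1),
    l * (x 0 * y 2 + x 2 * y 0) + x 2 * y 2 + (l + β - 1) / l * (x 1 * y 2 + x 2 * y 1),
    x 1 * y 2 + x 2 * y 1]

/-- The basis vector `o`. -/
noncomputable def vo : Fin 4 → ℝ := ![1, 0, 0, 0]
/-- The basis vector `a`. -/
noncomputable def va : Fin 4 → ℝ := ![0, 1, 0, 0]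
/-- The basis vector `b`. -/
noncomputable def vb : Fin 4 → ℝ := ![0, 0, 1, 0]
/-- The basis vector `ab`. -/
noncomputable def vab : Fin 4 → ℝ := ![0, 0, 0, 1]

/-- A linear subspace `I` is an ideal of `B'(l, β)` if `x ∘ y ∈ I` whenever `y ∈ I`. -/
def IsIdeal (l β : ℝ) (I : Submodule ℝ (Fin 4 → ℝ)) : Prop :=
  ∀ x y : Fin 4 → ℝ, y ∈ I → Bmul l β x y ∈ I

lemma Bmul_apply (x y : Fin 4 → ℝ) :
    Bmul (1/2) (1/2) x y =
    ![x 0 * y 0,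
      (1/2) * (x 0 * y 1 + x 1 * y 0) + x 1 * y 1,
      (1/2) * (x 0 * y 2 + x 2 * y 0) + x 2 * y 2,
      x 1 * y 2 + x 2 * y 1] := by
  unfold Bmul
  norm_num

lemma indep_pair_a : LinearIndependent ℝ ![va, vab] := by
  rw [LinearIndependent.pair_iff]
  intro s t h
  constructor
  · simpa [va, vab] using congrFun h 1
  · simpa [va, vab] using congrFun h 3

lemma indep_pair_b : LinearIndependent ℝ ![vb, vab] := by
  rw [LinearIndependent.pair_iff]
  intro s t h
  constructor
  · simpa [vb, vab] using congrFun h 2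
  · simpa [vb, vab] using congrFun h 3

lemma range_pair (u v : Fin 4 → ℝ) : Set.range ![u, v] = {u, v} := by
  ext x
  simp [Fin.exists_fin_two, or_comm]

lemma finrank_pair_a :
    Module.finrank ℝ (Submodule.span ℝ ({va, vab} : Set (Fin 4 → ℝ))) = 2 := by
  rw [← range_pair, finrank_span_eq_card indep_pair_a]
  simp

lemma finrank_pair_b :
    Module.finrank ℝ (Submodule.span ℝ ({vb, vab} : Set (Fin 4 → ℝ))) = 2 := by
  rw [← range_pair, finrank_span_eq_card indep_pair_b]
  simp

lemma indep_oab : LinearIndependent ℝ ![vo, va, vb] := by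
  rw [Fintype.linearIndependent_iff]
  intro g hg
  simp only [Fin.sum_univ_three] at hg
  intro i
  fin_cases i
  · simpa [vo, va, vb] using congrFun hg 0
  · simpa [vo, va, vb] using congrFun hg 1
  · simpa [vo, va, vb] using congrFun hg 2

lemma indep_abab : LinearIndependent ℝ ![va, vb, vab] := by
  rw [Fintype.linearIndependent_iff]
  intro g hg
  simp only [Fin.sum_univ_three] at hg
  intro i
  fin_cases i
  · simpa [vab, va, vb] using congrFun hg 1
  · simpa [vab, va, vb] using congrFun hg 2
  · simpa [vab, va, vb] using congrFun hg 3

lemma ge_three {I : Submodule ℝ (Fin 4 → ℝ)} {u v w : Fin 4 → ℝ}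
    (h : LinearIndependent ℝ ![u, v, w]) (hu : u ∈ I) (hv : v ∈ I) (hw : w ∈ I) :
    3 ≤ Module.finrank ℝ I := by
  have h2 : LinearIndependent ℝ (![(⟨u, hu⟩ : I), ⟨v, hv⟩, ⟨w, hw⟩]) := by
    apply LinearIndependent.of_comp I.subtype
    convert h using 1
    funext i
    fin_cases i <;> rfl
  simpa using h2.fintype_card_le_finrank

lemma ideal_a : IsIdeal (1/2) (1/2) (Submodule.span ℝ ({va, vab} : Set (Fin 4 → ℝ))) := by
  intro x y hy
  obtain ⟨c, d, h⟩ := Submodule.mem_span_pair.mp hy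
  subst h
  rw [Submodule.mem_span_pair]
  refine ⟨(1/2) * (x 0 * c) + x 1 * c, x 2 * c, ?_⟩
  funext i
  rw [Bmul_apply]
  fin_cases i <;> simp [va, vab] <;> ring

lemma ideal_b : IsIdeal (1/2) (1/2) (Submodule.span ℝ ({vb, vab} : Set (Fin 4 → ℝ))) := by
  intro x y hy
  obtain ⟨c, d, h⟩ := Submodule.mem_span_pair.mp hy
  subst h
  rw [Submodule.mem_span_pair]
  refine ⟨(1/2) * (x 0 * c) + x 2 * c, x 1 * c, ?_⟩
  funext i
  rw [Bmul_apply]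
  fin_cases i <;> simp [vb, vab] <;> ring

/-- If `l = β = 1/2`, the 2-dimensional ideals of `B'(1/2, 1/2)` are exactly
`span {a, ab}` and `span {b, ab}`. -/
theorem stmt_9 :
    ∀ I : Submodule ℝ (Fin 4 → ℝ),
      (IsIdeal (1 / 2) (1 / 2) I ∧ Module.finrank ℝ I = 2) ↔
        (I = Submodule.span ℝ ({va, vab} : Set (Fin 4 → ℝ)) ∨
         I = Submodule.span ℝ ({vb, vab} : Set (Fin 4 → ℝ))) := by
  intro I
  constructor
  · rintro ⟨hI, h2⟩
    have cancel : ∀ (c : ℝ) (v : Fin 4 → ℝ), c ≠ 0 → c • v ∈ I → v ∈ I := by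
      intro c v hc h
      have := I.smul_mem c⁻¹ h
      rwa [smul_smul, inv_mul_cancel₀ hc, one_smul] at this
    -- every element of I has first coordinate zero
    have hy0 : ∀ y ∈ I, y 0 = 0 := by
      intro y hy
      by_contra h0
      have h1 : Bmul (1/2) (1/2) vo y ∈ I := hI vo y hy
      have hb2 : Bmul (1/2) (1/2) vo (Bmul (1/2) (1/2) vo y) ∈ I := hI vo _ h1
      have ho' : (y 0) • vo ∈ I := by
        have hmem := I.sub_mem (I.smul_mem (2:ℝ) hb2) h1
        have heq : (y 0) • vo =
            (2:ℝ) • Bmul (1/2) (1/2) vo (Bmul (1/2) (1/2) vo y) - Bmul (1/2) (1/2) vo y := by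
          funext i
          simp only [Bmul_apply]
          fin_cases i <;> simp [vo] <;> ring
        rwa [heq]
      have ho : vo ∈ I := cancel _ _ h0 ho'
      have ha : va ∈ I := by
        apply cancel (1/2 : ℝ) va (by norm_num)
        have heq : (1/2 : ℝ) • va = Bmul (1/2) (1/2) va vo := by
          funext i
          simp only [Bmul_apply]
          fin_cases i <;> simp [vo, va] <;> ring
        rw [heq]; exact hI va vo ho
      have hb : vb ∈ I := by
        apply cancel (1/2 : ℝ) vb (by norm_num)
        have heq : (1/2 : ℝ) • vb = Bmul (1/2) (1/2) vb vo := by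
          funext i
          simp only [Bmul_apply]
          fin_cases i <;> simp [vo, vb] <;> ring
        rw [heq]; exact hI vb vo ho
      have := ge_three indep_oab ho ha hb
      omega
    have key1 : ∀ y ∈ I, (y 1) • va ∈ I := by
      intro y hy
      have hmem := hI va _ (hI va y hy)
      have heq : (y 1) • va = Bmul (1/2) (1/2) va (Bmul (1/2) (1/2) va y) := by
        funext i
        simp only [Bmul_apply]
        fin_cases i <;> simp [va, hy0 y hy] <;> ring
      rwa [heq]
    have key2 : ∀ y ∈ I, (y 2) • vb ∈ I := by
      intro y hy
      have hmem := hI vb _ (hI vb y hy)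
      have heq : (y 2) • vb = Bmul (1/2) (1/2) vb (Bmul (1/2) (1/2) vb y) := by
        funext i
        simp only [Bmul_apply]
        fin_cases i <;> simp [vb, hy0 y hy] <;> ring
      rwa [heq]
    by_cases hA : ∀ y ∈ I, y 1 = 0
    · right
      have hle : I ≤ Submodule.span ℝ ({vb, vab} : Set (Fin 4 → ℝ)) := by
        intro y hy
        rw [Submodule.mem_span_pair]
        refine ⟨y 2, y 3, ?_⟩
        funext i
        fin_cases i <;> simp [vb, vab, hy0 y hy, hA y hy]
      exact Submodule.eq_of_le_of_finrank_eq hle (by rw [h2, finrank_pair_b])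
    · push_neg at hA
      obtain ⟨y, hy, hy1⟩ := hA
      have ha : va ∈ I := cancel _ _ hy1 (key1 y hy)
      by_cases hB : ∀ z ∈ I, z 2 = 0
      · left
        have hle : I ≤ Submodule.span ℝ ({va, vab} : Set (Fin 4 → ℝ)) := by
          intro z hz
          rw [Submodule.mem_span_pair]
          refine ⟨z 1, z 3, ?_⟩
          funext i
          fin_cases i <;> simp [va, vab, hy0 z hz, hB z hz]
        exact Submodule.eq_of_le_of_finrank_eq hle (by rw [h2, finrank_pair_a])
      · push_neg at hB
        obtain ⟨z, hz, hz2⟩ := hB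
        have hb : vb ∈ I := cancel _ _ hz2 (key2 z hz)
        have hab : vab ∈ I := by
          have hmem := hI vb va ha
          have heq : vab = Bmul (1/2) (1/2) vb va := by
            funext i
            simp only [Bmul_apply]
            fin_cases i <;> simp [va, vb, vab]
          rwa [heq]
        have := ge_three indep_abab ha hb hab
        omega
  · rintro (rfl | rfl)
    · exact ⟨ideal_a, finrank_pair_a⟩
    · exact ⟨ideal_b, finrank_pair_b⟩
end

section
/- If β = 1−λ and λ ≠ 1/2, then the ideals of B'(λ,1−λ) are exactly the five subspaces: {0}, span{ab}, span{a, ab}, span{a, b, ab}, and B'(λ,1−λ) itself; in particular they form a chain under inclusion. -/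
/- Auxiliary lemmas -/

lemma Bmul_expand (l : ℝ) (x y : Fin 4 → ℝ) : Bmul l (1-l) x y =
    ![x 0 * y 0,
      l * (x 0 * y 1 + x 1 * y 0) + x 1 * y 1 + (2*l-1)/l * (x 1 * y 2 + x 2 * y 1),
      l * (x 0 * y 2 + x 2 * y 0) + x 2 * y 2,
      x 1 * y 2 + x 2 * y 1] := by
  funext i
  fin_cases i <;> simp [Bmul] <;> exact Or.inl (by ring)

lemma Bmul_vo (l : ℝ) (y : Fin 4 → ℝ) :
    Bmul l (1-l) vo y = ![y 0, l * y 1, l * y 2, 0] := by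
  funext i
  fin_cases i <;> simp [Bmul, vo] <;> exact Or.inl (by ring)

lemma Bmul_va (l : ℝ) (y : Fin 4 → ℝ) :
    Bmul l (1-l) va y = ![0, l * y 0 + y 1 + (2*l-1)/l * y 2, 0, y 2] := by
  funext i
  fin_cases i <;> simp [Bmul, va] <;> exact Or.inl (by ring)

lemma Bmul_vb (l : ℝ) (y : Fin 4 → ℝ) :
    Bmul l (1-l) vb y = ![0, (2*l-1)/l * y 1, l * y 0 + y 2, y 1] := by
  funext i
  fin_cases i <;> simp [Bmul, vb] <;> exact Or.inl (by ring)

lemma memS1 (x : Fin 4 → ℝ) : x ∈ Submodule.span ℝ ({vab} : Set (Fin 4 → ℝ)) ↔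
    x 0 = 0 ∧ x 1 = 0 ∧ x 2 = 0 := by
  rw [Submodule.mem_span_singleton]
  constructor
  · rintro ⟨c, rfl⟩; simp [vab]
  · rintro ⟨h0, h1, h2⟩
    exact ⟨x 3, by funext i; fin_cases i <;> simp [vab, h0, h1, h2]⟩

lemma memS2 (x : Fin 4 → ℝ) : x ∈ Submodule.span ℝ ({va, vab} : Set (Fin 4 → ℝ)) ↔
    x 0 = 0 ∧ x 2 = 0 := by
  rw [Submodule.mem_span_pair]
  constructor
  · rintro ⟨c, d, rfl⟩; simp [va, vab]
  · rintro ⟨h0, h2⟩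
    exact ⟨x 1, x 3, by funext i; fin_cases i <;> simp [va, vab, h0, h2]⟩

lemma memS3 (x : Fin 4 → ℝ) : x ∈ Submodule.span ℝ ({va, vb, vab} : Set (Fin 4 → ℝ)) ↔
    x 0 = 0 := by
  constructor
  · intro hx
    have hle : Submodule.span ℝ ({va, vb, vab} : Set (Fin 4 → ℝ)) ≤
        LinearMap.ker (LinearMap.proj (R := ℝ) (φ := fun _ : Fin 4 => ℝ) 0) := by
      rw [Submodule.span_le]
      rintro z hz
      simp only [Set.mem_insert_iff, Set.mem_singleton_iff] at hz
      rcases hz with rfl | rfl | rfl <;> simp [va, vb, vab]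
    exact hle hx
  · intro h0
    have hx : x = x 1 • va + x 2 • vb + x 3 • vab := by
      funext i; fin_cases i <;> simp [va, vb, vab, h0]
    rw [hx]
    refine Submodule.add_mem _ (Submodule.add_mem _ ?_ ?_) ?_ <;>
      exact Submodule.smul_mem _ _ (Submodule.subset_span (by simp))

lemma classify (l : ℝ) (hl0 : 0 < l) (hl1 : l < 1) (hl : l ≠ 1 / 2)
    (I : Submodule ℝ (Fin 4 → ℝ)) :
    IsIdeal l (1-l) I ↔
      (I = ⊥ ∨ I = Submodule.span ℝ ({vab} : Set (Fin 4 → ℝ)) ∨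
       I = Submodule.span ℝ ({va, vab} : Set (Fin 4 → ℝ)) ∨
       I = Submodule.span ℝ ({va, vb, vab} : Set (Fin 4 → ℝ)) ∨ I = ⊤) := by
  have hl' : l ≠ 0 := ne_of_gt hl0
  have hlm1 : l - 1 ≠ 0 := sub_ne_zero.mpr (ne_of_lt hl1)
  have h2l : 2*l - 1 ≠ 0 := by
    intro h; apply hl; linarith
  have hc : (2*l-1)/l ≠ 0 := div_ne_zero h2l hl'
  have hc1 : 1 - (2*l-1)/l ≠ 0 := by
    rw [show (1 : ℝ) - (2*l-1)/l = (1-l)/l by field_simp; ring]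
    exact div_ne_zero (by intro h; apply hlm1; linarith) hl'
  constructor
  · intro hI
    by_cases h0 : ∃ y ∈ I, y 0 ≠ 0
    · -- I = ⊤
      obtain ⟨y, hyI, hy0⟩ := h0
      have m1 : Bmul l (1-l) vo y ∈ I := hI _ _ hyI
      have m2 : Bmul l (1-l) vo (Bmul l (1-l) vo y) ∈ I := hI _ _ m1
      have hvo : vo ∈ I := by
        have e : (l/(l-1)) • Bmul l (1-l) vo y +
            (-(1/(l-1))) • Bmul l (1-l) vo (Bmul l (1-l) vo y) = y 0 • vo := by
          simp only [Bmul_vo]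
          funext i
          fin_cases i <;> (try simp [vo]) <;> (try field_simp) <;> (try ring)
        have m : y 0 • vo ∈ I := e ▸ Submodule.add_mem _ (Submodule.smul_mem _ _ m1)
          (Submodule.smul_mem _ _ m2)
        have h' := Submodule.smul_mem _ (y 0)⁻¹ m
        rwa [inv_smul_smul₀ hy0] at h'
      have hva : va ∈ I := by
        have m := hI va vo hvo
        have e : Bmul l (1-l) va vo = l • va := by
          rw [Bmul_va]
          funext i
          fin_cases i <;> (try simp [va, vo]) <;> (try field_simp) <;> (try ring)
        rw [e] at m
        have h' := Submodule.smul_mem _ l⁻¹ m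
        rwa [inv_smul_smul₀ hl'] at h'
      have hvb : vb ∈ I := by
        have m := hI vb vo hvo
        have e : Bmul l (1-l) vb vo = l • vb := by
          rw [Bmul_vb]
          funext i
          fin_cases i <;> (try simp [vb, vo]) <;> (try field_simp) <;> (try ring)
        rw [e] at m
        have h' := Submodule.smul_mem _ l⁻¹ m
        rwa [inv_smul_smul₀ hl'] at h'
      have hvab : vab ∈ I := by
        have m := hI va vb hvb
        have e : vab = Bmul l (1-l) va vb + (-((2*l-1)/l)) • va := by
          rw [Bmul_va]
          funext i
          fin_cases i <;> (try simp [va, vb, vab]) <;> (try field_simp) <;> (try ring)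
        rw [e]; exact Submodule.add_mem _ m (Submodule.smul_mem _ _ hva)
      refine Or.inr (Or.inr (Or.inr (Or.inr ?_)))
      rw [eq_top_iff]
      intro x _
      have e : x = x 0 • vo + x 1 • va + x 2 • vb + x 3 • vab := by
        funext i; fin_cases i <;> simp [vo, va, vb, vab]
      rw [e]
      exact Submodule.add_mem _ (Submodule.add_mem _ (Submodule.add_mem _
        (Submodule.smul_mem _ _ hvo) (Submodule.smul_mem _ _ hva))
        (Submodule.smul_mem _ _ hvb)) (Submodule.smul_mem _ _ hvab)
    push_neg at h0
    by_cases h2 : ∃ y ∈ I, y 2 ≠ 0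
    · -- I = span {va, vb, vab}
      obtain ⟨y, hyI, hy2⟩ := h2
      have hy0 := h0 y hyI
      have m1 : Bmul l (1-l) va (Bmul l (1-l) va y) ∈ I := hI _ _ (hI _ _ hyI)
      have e1 : Bmul l (1-l) va (Bmul l (1-l) va y) =
          ![0, y 1 + (2*l-1)/l * y 2, 0, 0] := by
        simp only [Bmul_va]
        funext i
        fin_cases i <;> (try simp [hy0]) <;> (try ring)
      have m2 : Bmul l (1-l) va (Bmul l (1-l) va (Bmul l (1-l) vb y)) ∈ I :=
        hI _ _ (hI _ _ (hI _ _ hyI))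
      have e2 : Bmul l (1-l) va (Bmul l (1-l) va (Bmul l (1-l) vb y)) =
          ![0, (2*l-1)/l * y 1 + (2*l-1)/l * y 2, 0, 0] := by
        simp only [Bmul_va, Bmul_vb]
        funext i
        fin_cases i <;> (try simp [hy0]) <;> (try ring)
      have hva : va ∈ I := by
        by_cases hs : y 1 + (2*l-1)/l * y 2 = 0
        · have hy1 : y 1 = -((2*l-1)/l * y 2) := by linarith
          have hne : (2*l-1)/l * y 1 + (2*l-1)/l * y 2 ≠ 0 := by
            rw [hy1, show (2*l-1)/l * -((2*l-1)/l * y 2) + (2*l-1)/l * y 2 =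
              ((2*l-1)/l) * (1 - (2*l-1)/l) * y 2 by ring]
            exact mul_ne_zero (mul_ne_zero hc hc1) hy2
          have e : (![0, (2*l-1)/l * y 1 + (2*l-1)/l * y 2, 0, 0] : Fin 4 → ℝ) =
              ((2*l-1)/l * y 1 + (2*l-1)/l * y 2) • va := by
            funext i
            fin_cases i <;> (try simp [va]) <;> (try ring)
          rw [e] at e2
          have m : ((2*l-1)/l * y 1 + (2*l-1)/l * y 2) • va ∈ I := e2 ▸ m2
          have h' := Submodule.smul_mem _ ((2*l-1)/l * y 1 + (2*l-1)/l * y 2)⁻¹ m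
          rwa [inv_smul_smul₀ hne] at h'
        · have e : (![0, y 1 + (2*l-1)/l * y 2, 0, 0] : Fin 4 → ℝ) =
              (y 1 + (2*l-1)/l * y 2) • va := by
            funext i
            fin_cases i <;> (try simp [va]) <;> (try ring)
          rw [e] at e1
          have m : (y 1 + (2*l-1)/l * y 2) • va ∈ I := e1 ▸ m1
          have h' := Submodule.smul_mem _ (y 1 + (2*l-1)/l * y 2)⁻¹ m
          rwa [inv_smul_smul₀ hs] at h'
      have hvab : vab ∈ I := by
        have m := hI va y hyI
        have e : Bmul l (1-l) va y +
            (-(l * y 0 + y 1 + (2*l-1)/l * y 2)) • va = y 2 • vab := by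
          rw [Bmul_va]
          funext i
          fin_cases i <;> (try simp [va, vab, hy0]) <;> (try field_simp) <;> (try ring)
        have mm : y 2 • vab ∈ I := e ▸ Submodule.add_mem _ m (Submodule.smul_mem _ _ hva)
        have h' := Submodule.smul_mem _ (y 2)⁻¹ mm
        rwa [inv_smul_smul₀ hy2] at h'
      have hvb : vb ∈ I := by
        have e : y + (-(y 1)) • va + (-(y 3)) • vab = y 2 • vb := by
          funext i
          fin_cases i <;>
            (try simp [va, vb, vab, Matrix.vecHead, Matrix.vecTail, hy0]) <;>
            (try rw [show ((2 : Fin 3).succ : Fin 4) = 3 from rfl]) <;>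
            (try field_simp) <;> (try ring)
        have mm : y 2 • vb ∈ I := e ▸ Submodule.add_mem _
          (Submodule.add_mem _ hyI (Submodule.smul_mem _ _ hva)) (Submodule.smul_mem _ _ hvab)
        have h' := Submodule.smul_mem _ (y 2)⁻¹ mm
        rwa [inv_smul_smul₀ hy2] at h'
      refine Or.inr (Or.inr (Or.inr (Or.inl ?_)))
      apply le_antisymm
      · intro x hx; exact (memS3 x).mpr (h0 x hx)
      · rw [Submodule.span_le]
        rintro z hz
        simp only [Set.mem_insert_iff, Set.mem_singleton_iff] at hz
        rcases hz with rfl | rfl | rfl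
        exacts [hva, hvb, hvab]
    push_neg at h2
    by_cases h1 : ∃ y ∈ I, y 1 ≠ 0
    · -- I = span {va, vab}
      obtain ⟨y, hyI, hy1⟩ := h1
      have hy0 := h0 y hyI
      have hy2 := h2 y hyI
      have hva : va ∈ I := by
        have m := hI vo y hyI
        have e : Bmul l (1-l) vo y = (l * y 1) • va := by
          rw [Bmul_vo]
          funext i
          fin_cases i <;> (try simp [va, hy0, hy2]) <;> (try field_simp) <;> (try ring)
        rw [e] at m
        have h' := Submodule.smul_mem _ (l * y 1)⁻¹ m
        rwa [inv_smul_smul₀ (mul_ne_zero hl' hy1)] at h'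
      have hvab : vab ∈ I := by
        have m := hI vb y hyI
        have e : Bmul l (1-l) vb y + (-((2*l-1)/l * y 1)) • va = y 1 • vab := by
          rw [Bmul_vb]
          funext i
          fin_cases i <;> (try simp [va, vab, hy0, hy2]) <;> (try field_simp) <;> (try ring)
        have mm : y 1 • vab ∈ I := e ▸ Submodule.add_mem _ m (Submodule.smul_mem _ _ hva)
        have h' := Submodule.smul_mem _ (y 1)⁻¹ mm
        rwa [inv_smul_smul₀ hy1] at h'
      refine Or.inr (Or.inr (Or.inl ?_))
      apply le_antisymm
      · intro x hx; exact (memS2 x).mpr ⟨h0 x hx, h2 x hx⟩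
      · rw [Submodule.span_le]
        rintro z hz
        simp only [Set.mem_insert_iff, Set.mem_singleton_iff] at hz
        rcases hz with rfl | rfl
        exacts [hva, hvab]
    push_neg at h1
    by_cases h3 : ∃ y ∈ I, y 3 ≠ 0
    · -- I = span {vab}
      obtain ⟨y, hyI, hy3⟩ := h3
      have hvab : vab ∈ I := by
        have e : y = y 3 • vab := by
          funext i
          fin_cases i <;>
            (try simp [vab, h0 y hyI, h1 y hyI, h2 y hyI]) <;> (try field_simp) <;> (try ring)
        rw [e] at hyI
        have h' := Submodule.smul_mem _ (y 3)⁻¹ hyI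
        rwa [inv_smul_smul₀ hy3] at h'
      refine Or.inr (Or.inl ?_)
      apply le_antisymm
      · intro x hx; exact (memS1 x).mpr ⟨h0 x hx, h1 x hx, h2 x hx⟩
      · rw [Submodule.span_le]
        rintro z hz
        simp only [Set.mem_singleton_iff] at hz
        subst hz
        exact hvab
    push_neg at h3
    left
    rw [eq_bot_iff]
    intro x hx
    rw [Submodule.mem_bot]
    funext i
    fin_cases i
    exacts [h0 x hx, h1 x hx, h2 x hx, h3 x hx]
  · rintro (rfl | rfl | rfl | rfl | rfl) <;> intro x y hy
    · rw [Submodule.mem_bot] at hy ⊢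
      subst hy
      funext i
      fin_cases i <;> simp [Bmul]
    · obtain ⟨h0, h1, h2⟩ := (memS1 y).mp hy
      refine (memS1 _).mpr ⟨?_, ?_, ?_⟩ <;> simp [Bmul_expand, h0, h1, h2]
    · obtain ⟨h0, h2⟩ := (memS2 y).mp hy
      refine (memS2 _).mpr ⟨?_, ?_⟩ <;> simp [Bmul_expand, h0, h2]
    · have h0 := (memS3 y).mp hy
      refine (memS3 _).mpr ?_
      simp [Bmul_expand, h0]
    · exact Submodule.mem_top

/-- If `β = 1 - l` and `l ≠ 1/2`, the ideals of `B'(l, 1-l)` are exactly `{0}`, `span {ab}`,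
`span {a, ab}`, `span {a, b, ab}` and the whole algebra; in particular they form a chain
under inclusion. -/
theorem stmt_13 (l β : ℝ) (hl0 : 0 < l) (hl1 : l < 1) (hβ0 : 0 < β) (hβ1 : β < 1)
    (hβ : β = 1 - l) (hl : l ≠ 1 / 2) :
    (∀ I : Submodule ℝ (Fin 4 → ℝ),
      IsIdeal l β I ↔
        (I = ⊥ ∨ I = Submodule.span ℝ ({vab} : Set (Fin 4 → ℝ)) ∨
         I = Submodule.span ℝ ({va, vab} : Set (Fin 4 → ℝ)) ∨
         I = Submodule.span ℝ ({va, vb, vab} : Set (Fin 4 → ℝ)) ∨ I = ⊤)) ∧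
    (∀ I J : Submodule ℝ (Fin 4 → ℝ), IsIdeal l β I → IsIdeal l β J → I ≤ J ∨ J ≤ I) := by
  subst hβ
  have key := classify l hl0 hl1 hl
  refine ⟨key, ?_⟩
  intro I J hI hJ
  have h12 : Submodule.span ℝ ({vab} : Set (Fin 4 → ℝ)) ≤
      Submodule.span ℝ ({va, vab} : Set (Fin 4 → ℝ)) :=
    Submodule.span_mono (Set.subset_insert _ _)
  have h23 : Submodule.span ℝ ({va, vab} : Set (Fin 4 → ℝ)) ≤
      Submodule.span ℝ ({va, vb, vab} : Set (Fin 4 → ℝ)) :=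
    Submodule.span_mono (Set.insert_subset_insert (Set.subset_insert _ _))
  rcases (key I).mp hI with rfl | rfl | rfl | rfl | rfl <;>
    rcases (key J).mp hJ with rfl | rfl | rfl | rfl | rfl <;>
      first
        | exact Or.inl bot_le
        | exact Or.inr bot_le
        | exact Or.inl le_top
        | exact Or.inr le_top
        | exact Or.inl le_rfl
        | exact Or.inl h12
        | exact Or.inr h12
        | exact Or.inl h23
        | exact Or.inr h23
        | exact Or.inl (h12.trans h23)
        | exact Or.inr (h12.trans h23)
end
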